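/- arXiv:2508.18264 — 5 statements merged into one kernel-verified Lean document; each statement's English description precedes it below -/
import Mathlib

section
/- Let N be a finite set and let g be a monotone submodular set function on N. Then for every subset S ⊆ N and every nonempty subset A ⊆ N with |A| = k, there exists s ∈ A such that g(S ∪ {s}) − g(S) ≥ ( g(A) − g(S) ) / k. -/
/-- A set function `g` on the ground set `N` is submodular if for all `A ⊆ B ⊆ N` and all
`s ∈ N \ B`, `g(A ∪ {s}) − g(A) ≥ g(B ∪ {s}) − g(B)`. -/
def SubmodularOn {α : Type*} [DecidableEq α] (N : Finset α) (g : Finset α → ℝ) : Prop :=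
  ∀ A B : Finset α, A ⊆ B → B ⊆ N → ∀ s ∈ N, s ∉ B →
    g (B ∪ {s}) - g B ≤ g (A ∪ {s}) - g A

/-- A set function `g` on the ground set `N` is monotone if `A ⊆ B ⊆ N` implies
`g(A) ≤ g(B)`. -/
def MonotoneSetFn {α : Type*} (N : Finset α) (g : Finset α → ℝ) : Prop :=
  ∀ A B : Finset α, A ⊆ B → B ⊆ N → g A ≤ g B

private lemma sum_marginals {α : Type*} [DecidableEq α] (N : Finset α)
    (g : Finset α → ℝ) (hsub : SubmodularOn N g)
    (S : Finset α) (hS : S ⊆ N) :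
    ∀ A : Finset α, A ⊆ N → g (S ∪ A) - g S ≤ ∑ a ∈ A, (g (S ∪ {a}) - g S) := by
  intro A
  induction A using Finset.induction_on with
  | empty => intro _; simp
  | @insert a T ha ih =>
    intro hins
    have haN : a ∈ N := hins (Finset.mem_insert_self a T)
    have hTN : T ⊆ N := fun x hx => hins (Finset.mem_insert_of_mem hx)
    rw [Finset.sum_insert ha]
    have key : g (S ∪ insert a T) - g (S ∪ T) ≤ g (S ∪ {a}) - g S := by
      by_cases haS : a ∈ S ∪ T
      · have h1 : S ∪ insert a T = S ∪ T := by
          have hm := Finset.mem_union.mp haS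
          ext x; simp only [Finset.mem_union, Finset.mem_insert]
          constructor
          · rintro (h | rfl | h) <;> tauto
          · tauto
        have haS' : a ∈ S := by
          rcases Finset.mem_union.mp haS with h | h
          · exact h
          · exact absurd h ha
        have h2 : S ∪ {a} = S := by
          simp [Finset.union_eq_left.mpr (Finset.singleton_subset_iff.mpr haS')]
        rw [h1, h2]; simp
      · have := hsub S (S ∪ T) Finset.subset_union_left
          (Finset.union_subset hS hTN) a haN haS
        have he : S ∪ T ∪ {a} = S ∪ insert a T := by
          rw [Finset.insert_eq]; ext x; simp
        rw [he] at this
        exact this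
    have := ih hTN
    linarith

/-- For a monotone submodular `g`, any `S ⊆ N` and any nonempty `A ⊆ N` of size `k`, some
element `s ∈ A` has marginal gain at least `(g(A) − g(S))/k`. -/
theorem submodular_exists_good_element {α : Type*} [DecidableEq α] (N : Finset α)
    (g : Finset α → ℝ) (hsub : SubmodularOn N g) (hmono : MonotoneSetFn N g)
    (S : Finset α) (hS : S ⊆ N) (A : Finset α) (hA : A ⊆ N) (hne : A.Nonempty)
    (k : ℕ) (hk : A.card = k) :
    ∃ s ∈ A, g (S ∪ {s}) - g S ≥ (g A - g S) / k := by
  by_contra h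
  push_neg at h
  have hk0 : 0 < (k : ℝ) := by
    have := Finset.card_pos.mpr hne
    rw [hk] at this
    exact_mod_cast this
  have hsum : ∑ a ∈ A, (g (S ∪ {a}) - g S) < ∑ _a ∈ A, (g A - g S) / k :=
    Finset.sum_lt_sum_of_nonempty hne (fun i hi => h i hi)
  rw [Finset.sum_const, hk, nsmul_eq_mul, mul_div_cancel₀ _ (ne_of_gt hk0)] at hsum
  have h1 : g (S ∪ A) - g S ≤ ∑ a ∈ A, (g (S ∪ {a}) - g S) :=
    sum_marginals N g hsub S hS A hA
  have h2 : g A ≤ g (S ∪ A) :=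
    hmono A (S ∪ A) Finset.subset_union_right (Finset.union_subset hS hA)
  linarith
end

section
/- Let N be a finite set, let g be a monotone submodular set function on N, let k ≥ 1, and let A ⊆ N with |A| = k. Suppose S ⊆ N and s* ∈ N maximizes the marginal gain g(S ∪ {s}) − g(S) over all s ∈ N. Then g(A) − g(S ∪ {s*}) ≤ (1 − 1/k) · ( g(A) − g(S) ). -/
/-!
Submodularity bounds the gain `g(S ∪ A) − g(S)` by the sum of the `k` single-element marginal
gains `g(S ∪ {a}) − g(S)`, `a ∈ A`, each of which is at most that of the greedy choice `s*`.
With monotonicity this gives `g(A) − g(S) ≤ k (g(S ∪ {s*}) − g(S))`, which rearranges to the claim.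
-/

def marginalGain {α : Type*} [DecidableEq α] (g : Finset α → ℝ) (S : Finset α) (s : α) : ℝ :=
  g (S ∪ {s}) - g S

namespace SubmodularOn

variable {α : Type*} [DecidableEq α] {N : Finset α} {g : Finset α → ℝ}

theorem sub_le_marginalGain (hsub : SubmodularOn N g) {S T : Finset α} (hS : S ⊆ N)
    (hT : T ⊆ N) {a : α} (ha : a ∈ N) (haT : a ∉ T) :
    g (S ∪ insert a T) - g (S ∪ T) ≤ marginalGain g S a := by
  by_cases haS : a ∈ S
  · simp [marginalGain, Finset.union_insert, haS]
  have haST : a ∉ S ∪ T := by simp [haS, haT]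
  simpa only [marginalGain, Finset.union_insert, Finset.union_singleton]
    using hsub S (S ∪ T) Finset.subset_union_left (Finset.union_subset hS hT) a ha haST

theorem sub_le_sum_marginalGain (hsub : SubmodularOn N g) {S : Finset α} (hS : S ⊆ N)
    {T : Finset α} (hT : T ⊆ N) :
    g (S ∪ T) - g S ≤ ∑ s ∈ T, marginalGain g S s := by
  induction T using Finset.induction with
  | empty => simp
  | insert a T ha ih =>
    rw [Finset.insert_subset_iff] at hT
    rw [Finset.sum_insert ha]
    linarith [ih hT.2, hsub.sub_le_marginalGain hS hT.2 hT.1 ha]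

end SubmodularOn

theorem sub_le_card_mul_marginalGain {α : Type*} [DecidableEq α] {N : Finset α}
    {g : Finset α → ℝ} (hsub : SubmodularOn N g) (hmono : MonotoneSetFn N g)
    {A S : Finset α} (hA : A ⊆ N) (hS : S ⊆ N) {sStar : α}
    (hmax : ∀ s ∈ N, marginalGain g S s ≤ marginalGain g S sStar) :
    g A - g S ≤ A.card * marginalGain g S sStar := by
  calc g A - g S ≤ g (S ∪ A) - g S := by
        linarith [hmono A (S ∪ A) Finset.subset_union_right (Finset.union_subset hS hA)]
    _ ≤ ∑ s ∈ A, marginalGain g S s := hsub.sub_le_sum_marginalGain hS hA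
    _ ≤ ∑ _s ∈ A, marginalGain g S sStar := Finset.sum_le_sum fun s hs => hmax s (hA hs)
    _ = A.card * marginalGain g S sStar := by rw [Finset.sum_const, nsmul_eq_mul]

theorem greedy_step_gap_shrinks_general {α : Type*} [DecidableEq α] (N : Finset α)
    (g : Finset α → ℝ) (hsub : SubmodularOn N g) (hmono : MonotoneSetFn N g)
    (k : ℕ) (hk : 1 ≤ k) (A : Finset α) (hA : A ⊆ N) (hcard : A.card = k)
    (S : Finset α) (hS : S ⊆ N) (sStar : α)
    (hmax : ∀ s ∈ N, g (S ∪ {s}) - g S ≤ g (S ∪ {sStar}) - g S) :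
    g A - g (S ∪ {sStar}) ≤ (1 - 1 / (k : ℝ)) * (g A - g S) := by
  have hk_pos : (0 : ℝ) < k := by exact_mod_cast hk
  have hgap : g A - g S ≤ k * marginalGain g S sStar := by
    simpa [hcard] using sub_le_card_mul_marginalGain hsub hmono hA hS hmax
  have hstep : (g A - g S) / k ≤ marginalGain g S sStar := by
    rwa [div_le_iff₀ hk_pos, mul_comm]
  unfold marginalGain at hstep
  rw [sub_mul, one_mul, one_div_mul_eq_div]
  linarith

/-- One step of the greedy algorithm shrinks the gap to `g(A)` by a factor `1 − 1/k`. -/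
theorem greedy_step_gap_shrinks {α : Type*} [DecidableEq α] (N : Finset α)
    (g : Finset α → ℝ) (hsub : SubmodularOn N g) (hmono : MonotoneSetFn N g)
    (k : ℕ) (hk : 1 ≤ k) (A : Finset α) (hA : A ⊆ N) (hcard : A.card = k)
    (S : Finset α) (hS : S ⊆ N) (sStar : α) (hsStar : sStar ∈ N)
    (hmax : ∀ s ∈ N, g (S ∪ {s}) - g S ≤ g (S ∪ {sStar}) - g S) :
    g A - g (S ∪ {sStar}) ≤ (1 - 1 / (k : ℝ)) * (g A - g S) :=
  greedy_step_gap_shrinks_general N g hsub hmono k hk A hA hcard S hS sStar hmax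
end

section
/- Let N be a finite set, let g be a monotone submodular set function on N with g(∅) = 0, and let k ≥ 1. Let ∅ = S₀ ⊆ S₁ ⊆ … ⊆ S_k be a greedy chain, i.e., for each i < k, S_{i+1} = S_i ∪ {s_i} where s_i ∈ N maximizes g(S_i ∪ {s}) over all s ∈ N. Then for every A ⊆ N with |A| = k and every 0 ≤ i ≤ k, g(S_i) ≥ ( 1 − (1 − 1/k)^i ) · g(A). -/
lemma submod_expand {α : Type*} [DecidableEq α] (N : Finset α) (g : Finset α → ℝ)
    (hsub : SubmodularOn N g) :
    ∀ A : Finset α, A ⊆ N → ∀ T : Finset α, T ⊆ N →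
      g (T ∪ A) - g T ≤ ∑ a ∈ A \ T, (g (T ∪ {a}) - g T) := by
  intro A
  induction A using Finset.induction with
  | empty => intro _ T _; simp
  | @insert a A ha ih =>
    intro hAN T hTN
    have hAN' : A ⊆ N := fun x hx => hAN (Finset.mem_insert_of_mem hx)
    have haN : a ∈ N := hAN (Finset.mem_insert_self a A)
    by_cases haT : a ∈ T
    · have h1 : T ∪ insert a A = T ∪ A := by
        rw [Finset.union_insert, Finset.insert_eq_self.mpr (Finset.mem_union_left A haT)]
      have h2 : insert a A \ T = A \ T := Finset.insert_sdiff_of_mem A haT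
      rw [h1, h2]; exact ih hAN' T hTN
    · have h1 : T ∪ insert a A = (T ∪ A) ∪ {a} := by
        rw [Finset.union_insert]; ext x; simp [Finset.mem_insert, or_comm, or_assoc]
      have h2 : insert a A \ T = insert a (A \ T) :=
        Finset.insert_sdiff_of_notMem A haT
      have haTA : a ∉ T ∪ A := by simp [haT, ha]
      have hTA : T ∪ A ⊆ N := Finset.union_subset hTN hAN'
      have key := hsub T (T ∪ A) Finset.subset_union_left hTA a haN haTA
      have haAT : a ∉ A \ T := by simp [ha]
      rw [h1, h2, Finset.sum_insert haAT]
      have := ih hAN' T hTN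
      linarith

/-- Along a greedy chain `∅ = S₀ ⊆ S₁ ⊆ … ⊆ S_k`, after `i` steps we have
`g(Sᵢ) ≥ (1 − (1 − 1/k)^i)·g(A)` for every `A ⊆ N` of size `k`. -/
theorem greedy_chain_bound {α : Type*} [DecidableEq α] (N : Finset α)
    (g : Finset α → ℝ) (hsub : SubmodularOn N g) (hmono : MonotoneSetFn N g)
    (hempty : g ∅ = 0) (k : ℕ) (hk : 1 ≤ k)
    (S : ℕ → Finset α) (s : ℕ → α) (hS0 : S 0 = ∅)
    (hgreedy : ∀ i < k, s i ∈ N ∧ S (i + 1) = S i ∪ {s i} ∧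
      ∀ t ∈ N, g (S i ∪ {t}) ≤ g (S i ∪ {s i})) :
    ∀ A ⊆ N, A.card = k → ∀ i ≤ k, (1 - (1 - 1 / (k : ℝ)) ^ i) * g A ≤ g (S i) := by
  intro A hAN hAk
  have hkpos : (0 : ℝ) < k := by exact_mod_cast hk
  have hq0 : (0 : ℝ) ≤ 1 - 1 / (k : ℝ) := by
    rw [sub_nonneg]
    apply div_le_one_of_le₀
    · exact_mod_cast hk
    · positivity
  have hgA0 : 0 ≤ g A := by
    rw [← hempty]; exact hmono ∅ A (Finset.empty_subset A) hAN
  have hAne : A.Nonempty := Finset.card_pos.mp (by omega)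
  -- S i ⊆ N for i ≤ k
  have hSN : ∀ i ≤ k, S i ⊆ N := by
    intro i
    induction i with
    | zero => intro _; rw [hS0]; exact Finset.empty_subset N
    | succ j ih =>
      intro hj
      obtain ⟨hsN, hSj, _⟩ := hgreedy j (by omega)
      rw [hSj]
      exact Finset.union_subset (ih (by omega)) (by simpa using hsN)
  -- main induction: g A - g (S i) ≤ (1-1/k)^i * g A
  have main : ∀ i ≤ k, g A - g (S i) ≤ (1 - 1 / (k : ℝ)) ^ i * g A := by
    intro i
    induction i with
    | zero => intro _; rw [hS0, hempty]; simp
    | succ j ih =>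
      intro hj
      have hjk : j < k := by omega
      have ihj := ih (by omega)
      obtain ⟨hsN, hSj, hmax⟩ := hgreedy j hjk
      have hSjN : S j ⊆ N := hSN j (by omega)
      set d : ℝ := g (S j ∪ {s j}) - g (S j) with hd
      have hd0 : 0 ≤ d := by
        obtain ⟨t, ht⟩ := hAne
        have h1 : g (S j) ≤ g (S j ∪ {t}) := by
          apply hmono _ _ Finset.subset_union_left
          exact Finset.union_subset hSjN (by simpa using hAN ht)
        have h2 := hmax t (hAN ht)
        rw [hd]; linarith
      -- g A - g (S j) ≤ k * d
      have hstep : g A - g (S j) ≤ (k : ℝ) * d := by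
        have h1 : g A ≤ g (S j ∪ A) := by
          apply hmono _ _ Finset.subset_union_right
          exact Finset.union_subset hSjN hAN
        have h2 := submod_expand N g hsub A hAN (S j) hSjN
        have h3 : ∑ a ∈ A \ S j, (g (S j ∪ {a}) - g (S j)) ≤
            ∑ _a ∈ A \ S j, d := by
          apply Finset.sum_le_sum
          intro a haA
          have : a ∈ N := hAN (Finset.mem_sdiff.mp haA).1
          have := hmax a this
          rw [hd]; linarith
        rw [Finset.sum_const, nsmul_eq_mul] at h3
        have hcard : ((A \ S j).card : ℝ) ≤ (k : ℝ) := by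
          have : (A \ S j).card ≤ A.card := Finset.card_le_card (Finset.sdiff_subset)
          exact_mod_cast hAk ▸ this
        have h4 : ((A \ S j).card : ℝ) * d ≤ (k : ℝ) * d :=
          mul_le_mul_of_nonneg_right hcard hd0
        linarith
      have hSj1 : g (S (j + 1)) = g (S j) + d := by rw [hSj, hd]; ring
      have hdge : (g A - g (S j)) / (k : ℝ) ≤ d := by
        rw [div_le_iff₀ hkpos]; linarith
      have hrec : g A - g (S (j + 1)) ≤ (1 - 1 / (k : ℝ)) * (g A - g (S j)) := by
        rw [hSj1]
        have : (1 - 1 / (k : ℝ)) * (g A - g (S j)) =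
            (g A - g (S j)) - (g A - g (S j)) / (k : ℝ) := by
          field_simp
        rw [this]; linarith
      calc g A - g (S (j + 1)) ≤ (1 - 1 / (k : ℝ)) * (g A - g (S j)) := hrec
        _ ≤ (1 - 1 / (k : ℝ)) * ((1 - 1 / (k : ℝ)) ^ j * g A) :=
            mul_le_mul_of_nonneg_left ihj hq0
        _ = (1 - 1 / (k : ℝ)) ^ (j + 1) * g A := by ring
  intro i hi
  have := main i hi
  linarith
end

section
/- Let N be a finite set, let g be a monotone submodular set function on N with g(∅) = 0, and let k ≥ 1. Let ∅ = S₀ ⊆ S₁ ⊆ … ⊆ S_k be a greedy chain, i.e., for each i < k, S_{i+1} = S_i ∪ {s_i} where s_i ∈ N maximizes g(S_i ∪ {s}) over all s ∈ N. Then g(S_k) ≥ (1 − 1/e) · max { g(A) : A ⊆ N, |A| = k }, where e is Euler's number. -/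
/-!
If `B` is the current greedy set and `A` has `k` elements, submodularity bounds
`g A - g B ≤ g (B ∪ A) - g B` by the sum of the `k` single-element gains, each at most the
greedy gain. So every greedy step closes at least a `1/k` fraction of the gap to `g A`, and after
`k` steps the remaining gap is at most `(1 - 1/k)^k · g A ≤ g A / e`.
-/

open Finset

theorem SubmodularOn.sub_le_sum_marginal {α : Type*} [DecidableEq α] {N : Finset α}
    {g : Finset α → ℝ} (hsub : SubmodularOn N g) {B T : Finset α} (hB : B ⊆ N)
    (hT : T ⊆ N) :
    g (B ∪ T) - g B ≤ ∑ a ∈ T \ B, (g (B ∪ {a}) - g B) := by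
  induction T using Finset.induction_on with
  | empty => simp
  | @insert a T haT ih =>
    have hTN : T ⊆ N := (subset_insert a T).trans hT
    by_cases haB : a ∈ B
    · rw [union_insert, insert_eq_self.mpr (mem_union_left T haB),
        insert_sdiff_of_mem T haB]
      exact ih hTN
    · have hgain := hsub B (B ∪ T) subset_union_left (union_subset hB hTN) a
        (hT (mem_insert_self a T)) (by simp [haB, haT])
      rw [union_insert, insert_eq, union_comm {a}, insert_sdiff_of_notMem T haB,
        sum_insert (by simp [haT])]
      linarith [ih hTN]

theorem SubmodularOn.sub_le_card_mul_sub {α : Type*} [DecidableEq α] {N : Finset α}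
    {g : Finset α → ℝ} (hsub : SubmodularOn N g) (hmono : MonotoneSetFn N g)
    {A B : Finset α} (hA : A ⊆ N) (hB : B ⊆ N) {m : ℝ} (hBm : g B ≤ m)
    (hm : ∀ t ∈ N, g (B ∪ {t}) ≤ m) :
    g A - g B ≤ #A * (m - g B) := by
  have hcard : (#(A \ B) : ℝ) ≤ #A := by exact_mod_cast card_le_card sdiff_subset
  calc g A - g B ≤ g (B ∪ A) - g B := by
        linarith [hmono A (B ∪ A) subset_union_right (union_subset hB hA)]
    _ ≤ ∑ a ∈ A \ B, (g (B ∪ {a}) - g B) := hsub.sub_le_sum_marginal hB hA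
    _ ≤ #(A \ B) * (m - g B) := by
        rw [← nsmul_eq_mul]
        exact sum_le_card_nsmul _ _ _ fun a ha => by linarith [hm a (hA (mem_sdiff.mp ha).1)]
    _ ≤ #A * (m - g B) := mul_le_mul_of_nonneg_right hcard (by linarith)

theorem sub_le_one_sub_inv_pow_mul_of_sub_le {x : ℕ → ℝ} {c : ℝ} {k : ℕ} (hk : 1 ≤ k)
    (hgap : ∀ i < k, c - x i ≤ k * (x (i + 1) - x i)) :
    ∀ i ≤ k, c - x i ≤ (1 - 1 / k) ^ i * (c - x 0) := by
  have hk0 : (0 : ℝ) < k := by exact_mod_cast hk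
  have hr : 0 ≤ 1 - 1 / (k : ℝ) := sub_nonneg.mpr ((div_le_one hk0).mpr (by exact_mod_cast hk))
  intro i
  induction i with
  | zero => simp
  | succ i ih =>
    intro hi
    have hfrac : (c - x i) / k ≤ x (i + 1) - x i := by
      rw [div_le_iff₀ hk0]
      linarith [hgap i hi]
    calc c - x (i + 1) ≤ (c - x i) - (c - x i) / k := by linarith
      _ = (1 - 1 / k) * (c - x i) := by ring
      _ ≤ (1 - 1 / k) * ((1 - 1 / k) ^ i * (c - x 0)) :=
          mul_le_mul_of_nonneg_left (ih (by omega)) hr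
      _ = (1 - 1 / k) ^ (i + 1) * (c - x 0) := by ring

theorem one_sub_inv_exp_mul_le_of_sub_le {x : ℕ → ℝ} {c : ℝ} {k : ℕ} (hk : 1 ≤ k)
    (hc : 0 ≤ c) (hx0 : x 0 = 0) (hgap : ∀ i < k, c - x i ≤ k * (x (i + 1) - x i)) :
    (1 - 1 / Real.exp 1) * c ≤ x k := by
  have hpow : (1 - 1 / (k : ℝ)) ^ k ≤ 1 / Real.exp 1 := by
    simpa [Real.exp_neg] using Real.one_sub_div_pow_le_exp_neg (t := 1) (by exact_mod_cast hk)
  have := sub_le_one_sub_inv_pow_mul_of_sub_le hk hgap k le_rfl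
  rw [hx0, sub_zero] at this
  nlinarith

/-- The greedy algorithm achieves a `(1 − 1/e)`-approximation to the optimal subset of
cardinality `k` for a monotone submodular function with `g(∅) = 0`. -/
theorem greedy_one_sub_inv_e {α : Type*} [DecidableEq α] (N : Finset α)
    (g : Finset α → ℝ) (hsub : SubmodularOn N g) (hmono : MonotoneSetFn N g)
    (hempty : g ∅ = 0) (k : ℕ) (hk : 1 ≤ k)
    (S : ℕ → Finset α) (s : ℕ → α) (hS0 : S 0 = ∅)
    (hgreedy : ∀ i < k, s i ∈ N ∧ S (i + 1) = S i ∪ {s i} ∧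
      ∀ t ∈ N, g (S i ∪ {t}) ≤ g (S i ∪ {s i})) :
    ∀ A ⊆ N, A.card = k → (1 - 1 / Real.exp 1) * g A ≤ g (S k) := by
  intro A hA hAcard
  have hSN : ∀ i ≤ k, S i ⊆ N := by
    intro i
    induction i with
    | zero => simp [hS0]
    | succ i ih =>
      intro hi
      obtain ⟨hsN, hSeq, -⟩ := hgreedy i hi
      rw [hSeq]
      exact union_subset (ih (by omega)) (singleton_subset_iff.mpr hsN)
  refine one_sub_inv_exp_mul_le_of_sub_le (x := fun i => g (S i)) hk ?_
    (by rw [hS0, hempty]) fun i hi => ?_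
  · simpa [hempty] using hmono ∅ A (empty_subset A) hA
  obtain ⟨-, hSeq, hmax⟩ := hgreedy i hi
  rw [← hAcard, hSeq]
  refine hsub.sub_le_card_mul_sub hmono hA (hSN i hi.le) ?_ hmax
  exact hmono _ _ subset_union_left (hSeq ▸ hSN (i + 1) hi)
end

section
/- Let n ≥ 1 and let x ∈ ℝ^n be fixed. Then the maximum softmax probability τ ↦ max_{j} exp(x_j/τ) / ∑_{i=1}^n exp(x_i/τ) is a nonincreasing function of the temperature τ on (0, ∞): if 0 < τ₁ ≤ τ₂ then max_j softmax(x/τ₁)_j ≥ max_j softmax(x/τ₂)_j. -/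
/-! Let `k` maximize `x`. Every softmax probability at temperature `τ` is at most the one of `k`,
which is `(∑ i, exp ((x i - x k) / τ))⁻¹`. All exponents `(x i - x k) / τ` are `≤ 0`, so they
increase towards `0` as `τ` grows: the sum increases and its inverse decreases. -/

open Real

variable {ι : Type*} [Fintype ι] (x : ι → ℝ)

theorem exp_div_sum_exp_eq_inv_sum_exp_sub (j : ι) (τ : ℝ) :
    exp (x j / τ) / ∑ i, exp (x i / τ) = (∑ i, exp ((x i - x j) / τ))⁻¹ := by
  simp only [sub_div, exp_sub, ← Finset.sum_div, inv_div]

theorem exp_div_sum_exp_le_exp_div_sum_exp {i j : ι} (h : x i ≤ x j) {τ : ℝ} (hτ : 0 ≤ τ) :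
    exp (x i / τ) / ∑ l, exp (x l / τ) ≤ exp (x j / τ) / ∑ l, exp (x l / τ) := by
  have hexp : exp (x i / τ) ≤ exp (x j / τ) := exp_le_exp.2 (div_le_div_of_nonneg_right h hτ)
  exact div_le_div_of_nonneg_right hexp (by positivity)

theorem sum_exp_sub_div_monotoneOn {k : ι} (hk : ∀ i, x i ≤ x k) :
    MonotoneOn (fun τ => ∑ i, exp ((x i - x k) / τ)) (Set.Ioi 0) := by
  intro τ₁ hτ₁ τ₂ _ hτ
  refine Finset.sum_le_sum fun i _ => exp_le_exp.2 ?_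
  simpa only [div_eq_mul_inv] using
    mul_le_mul_of_nonpos_left (inv_anti₀ hτ₁ hτ) (sub_nonpos.2 (hk i))

theorem exp_div_sum_exp_antitoneOn {k : ι} (hk : ∀ i, x i ≤ x k) :
    AntitoneOn (fun τ => exp (x k / τ) / ∑ i, exp (x i / τ)) (Set.Ioi 0) := by
  intro τ₁ hτ₁ τ₂ hτ₂ hτ
  simp only [exp_div_sum_exp_eq_inv_sum_exp_sub]
  have : Nonempty ι := ⟨k⟩
  exact inv_anti₀ (by positivity) (sum_exp_sub_div_monotoneOn x hk hτ₁ hτ₂ hτ)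

theorem max_softmax_antitone_in_temperature_general (n : ℕ) (x : Fin n → ℝ)
    (τ₁ τ₂ : ℝ) (hτ₁ : 0 < τ₁) (hτ : τ₁ ≤ τ₂) :
    (⨆ j : Fin n, Real.exp (x j / τ₂) / ∑ i : Fin n, Real.exp (x i / τ₂)) ≤
      ⨆ j : Fin n, Real.exp (x j / τ₁) / ∑ i : Fin n, Real.exp (x i / τ₁) := by
  refine Real.iSup_le (fun j => ?_) (Real.iSup_nonneg fun j => by positivity)
  have : Nonempty (Fin n) := ⟨j⟩
  obtain ⟨k, hk⟩ := Finite.exists_max x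
  calc exp (x j / τ₂) / ∑ i, exp (x i / τ₂)
      ≤ exp (x k / τ₂) / ∑ i, exp (x i / τ₂) :=
        exp_div_sum_exp_le_exp_div_sum_exp x (hk j) (hτ₁.le.trans hτ)
    _ ≤ exp (x k / τ₁) / ∑ i, exp (x i / τ₁) :=
        exp_div_sum_exp_antitoneOn x hk hτ₁ (hτ₁.trans_le hτ) hτ
    _ ≤ ⨆ j, exp (x j / τ₁) / ∑ i, exp (x i / τ₁) :=
        le_ciSup (f := fun j => exp (x j / τ₁) / ∑ i, exp (x i / τ₁)) (Finite.bddAbove_range _) k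

/-- The maximum softmax probability is a nonincreasing function of the temperature:
if `0 < τ₁ ≤ τ₂`, then `max_j softmax(x/τ₁)_j ≥ max_j softmax(x/τ₂)_j`. -/
theorem max_softmax_antitone_in_temperature (n : ℕ) (hn : 1 ≤ n) (x : Fin n → ℝ)
    (τ₁ τ₂ : ℝ) (hτ₁ : 0 < τ₁) (hτ : τ₁ ≤ τ₂) :
    (⨆ j : Fin n, Real.exp (x j / τ₂) / ∑ i : Fin n, Real.exp (x i / τ₂)) ≤
      ⨆ j : Fin n, Real.exp (x j / τ₁) / ∑ i : Fin n, Real.exp (x i / τ₁) :=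
  max_softmax_antitone_in_temperature_general n x τ₁ τ₂ hτ₁ hτ
end
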